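/- Let S be a finite nonempty set, p : S → S → ℝ a stochastic matrix with all entries strictly positive, g : S → ℝ, and α ∈ ℝ. Suppose ρ : ℝ → ℝ and V : ℝ → S → ℝ satisfy, for every ζ ≥ 0: ρ(ζ) > 0, V(ζ) strictly positive, and ρ(ζ)·V(ζ)(i) = exp(ζ·g(i))·Σ_j p(i,j)·V(ζ)(j) for all i; suppose ρ and ζ ↦ V(ζ)(i) (for each i) are differentiable on (0, ∞). Let ζ* > 0 be an interior maximizer of ζ ↦ ζ·α − log ρ(ζ) over [0, ∞), and let u : S → ℝ be strictly positive with Σ_i u(i)·exp(ζ*·g(i))·p(i,j) = ρ(ζ*)·u(j) for all j. Then Σ_i π*(i)·g(i) = α, where π*(i) := u(i)·V(ζ*)(i) / Σ_j u(j)·V(ζ*)(j); that is, the stationary expectation of g under the tilted kernel at ζ* equals the conditioning threshold α. -/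

import Mathlib

/-!
Differentiating the eigen-relation `Q_ζ V(ζ) = ρ(ζ) V(ζ)` at `ζ*` and pairing with the left
eigenvector `u` of `Q_{ζ*}` makes the terms in `V'(ζ*)` cancel (Hellmann–Feynman), leaving
`ρ'(ζ*) ⟨u, V⟩ = ⟨u, Q' V⟩ = ρ(ζ*) ⟨u, g V⟩`, since `Q'_ζ` is `Q_ζ` with row `i` scaled by
`g i`. The first-order condition at the interior maximizer gives `ρ'(ζ*) = α ρ(ζ*)`, so
`⟨u, g V⟩ = α ⟨u, V⟩`, which is the claim after normalization.
-/

open Matrix Filter Topology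

theorem deriv_eq_mul_of_isLocalMax_mul_sub_log {ρ : ℝ → ℝ} {α x : ℝ}
    (hmax : IsLocalMax (fun t => t * α - Real.log (ρ t)) x)
    (hρ : DifferentiableAt ℝ ρ x) (hρx : ρ x ≠ 0) :
    deriv ρ x = α * ρ x := by
  have hderiv : HasDerivAt (fun t => t * α - Real.log (ρ t)) (α - deriv ρ x / ρ x) x := by
    simpa using ((hasDerivAt_id x).mul_const α).fun_sub (hρ.hasDerivAt.log hρx)
  have h0 := hmax.hasDerivAt_eq_zero hderiv
  field_simp at h0
  linarith

section HellmannFeynman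

variable {S : Type*} [Fintype S]

theorem hasDerivAt_mulVec_apply {A : ℝ → Matrix S S ℝ} {A' : Matrix S S ℝ}
    {v : ℝ → S → ℝ} {v' : S → ℝ} {x : ℝ}
    (hA : ∀ i j, HasDerivAt (fun t => A t i j) (A' i j) x)
    (hv : ∀ j, HasDerivAt (fun t => v t j) (v' j) x) (i : S) :
    HasDerivAt (fun t => (A t *ᵥ v t) i) ((A' *ᵥ v x) i + (A x *ᵥ v') i) x := by
  simp only [mulVec, dotProduct, ← Finset.sum_add_distrib]
  exact HasDerivAt.fun_sum fun j _ => (hA i j).mul (hv j)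

/-- Hellmann–Feynman formula. -/
theorem eigenvalue_deriv_mul_dotProduct {A : ℝ → Matrix S S ℝ} {A' : Matrix S S ℝ}
    {ρ : ℝ → ℝ} {ρ' : ℝ} {v : ℝ → S → ℝ} {v' : S → ℝ} {u : S → ℝ} {x : ℝ}
    (hA : ∀ i j, HasDerivAt (fun t => A t i j) (A' i j) x) (hρ : HasDerivAt ρ ρ' x)
    (hv : ∀ j, HasDerivAt (fun t => v t j) (v' j) x)
    (heig : ∀ᶠ t in 𝓝 x, A t *ᵥ v t = ρ t • v t) (hleft : u ᵥ* A x = ρ x • u) :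
    ρ' * (u ⬝ᵥ v x) = u ⬝ᵥ (A' *ᵥ v x) := by
  have hdiff : ρ' • v x + ρ x • v' = A' *ᵥ v x + A x *ᵥ v' := by
    funext i
    have hlhs : HasDerivAt (fun t => (A t *ᵥ v t) i) (ρ' * v x i + ρ x * v' i) x :=
      (hρ.mul (hv i)).congr_of_eventuallyEq <| heig.mono fun t ht => by simp [ht]
    simpa using hlhs.unique (hasDerivAt_mulVec_apply hA hv i)
  have hpair := congrArg (u ⬝ᵥ ·) hdiff
  simp only [dotProduct_add, dotProduct_smul, dotProduct_mulVec u (A x), hleft,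
    smul_dotProduct, smul_eq_mul] at hpair
  linarith

end HellmannFeynman

section Tilted

variable {S : Type*}

noncomputable def tiltedKernel (p : S → S → ℝ) (g : S → ℝ) (ζ : ℝ) : Matrix S S ℝ :=
  Matrix.of fun i j => Real.exp (ζ * g i) * p i j

variable [Fintype S]

theorem tiltedKernel_mulVec_apply (p : S → S → ℝ) (g : S → ℝ) (ζ : ℝ) (v : S → ℝ)
    (i : S) :
    (tiltedKernel p g ζ *ᵥ v) i = Real.exp (ζ * g i) * ∑ j, p i j * v j := by
  simp only [tiltedKernel, mulVec, dotProduct, of_apply, Finset.mul_sum, mul_assoc]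

theorem vecMul_tiltedKernel_apply (p : S → S → ℝ) (g : S → ℝ) (ζ : ℝ) (u : S → ℝ)
    (j : S) :
    (u ᵥ* tiltedKernel p g ζ) j = ∑ i, u i * (Real.exp (ζ * g i) * p i j) := rfl

theorem hasDerivAt_tiltedKernel_apply [DecidableEq S] (p : S → S → ℝ) (g : S → ℝ)
    (x : ℝ) (i j : S) :
    HasDerivAt (fun t => tiltedKernel p g t i j) ((diagonal g * tiltedKernel p g x) i j) x := by
  simpa [tiltedKernel, diagonal_mul, mul_comm, mul_left_comm, mul_assoc] using
    (((hasDerivAt_id x).mul_const (g i)).exp).mul_const (p i j)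

theorem tilted_eigenvalue_deriv_mul_dotProduct {ρ : ℝ → ℝ} {ρ' : ℝ} {v : ℝ → S → ℝ}
    {v' : S → ℝ} {p : S → S → ℝ} {g u : S → ℝ} {x : ℝ}
    (hρ : HasDerivAt ρ ρ' x) (hv : ∀ j, HasDerivAt (fun t => v t j) (v' j) x)
    (heig : ∀ᶠ t in 𝓝 x, tiltedKernel p g t *ᵥ v t = ρ t • v t)
    (hleft : u ᵥ* tiltedKernel p g x = ρ x • u) :
    ρ' * (u ⬝ᵥ v x) = ρ x * (u ⬝ᵥ (g * v x)) := by
  classical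
  rw [eigenvalue_deriv_mul_dotProduct (hasDerivAt_tiltedKernel_apply p g x) hρ hv heig hleft,
    ← mulVec_mulVec, heig.self_of_nhds, mulVec_smul, dotProduct_smul, smul_eq_mul]
  congr 2
  exact funext (mulVec_diagonal g (v x))

end Tilted

theorem stationary_mean_eq_threshold_at_maximizer_general
    {S : Type*} [Fintype S] [Nonempty S]
    (p : S → S → ℝ)
    (g : S → ℝ) (α : ℝ)
    (ρ : ℝ → ℝ) (V : ℝ → S → ℝ)
    (hρ : ∀ ζ : ℝ, 0 ≤ ζ → 0 < ρ ζ)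
    (hV : ∀ ζ : ℝ, 0 ≤ ζ → ∀ i, 0 < V ζ i)
    (heq : ∀ ζ : ℝ, 0 ≤ ζ → ∀ i,
      ρ ζ * V ζ i = Real.exp (ζ * g i) * ∑ j, p i j * V ζ j)
    (hρdiff : ∀ ζ : ℝ, 0 < ζ → DifferentiableAt ℝ ρ ζ)
    (hVdiff : ∀ ζ : ℝ, 0 < ζ → ∀ i, DifferentiableAt ℝ (fun t => V t i) ζ)
    (ζstar : ℝ) (hζstar : 0 < ζstar)
    (hmax : ∀ ζ : ℝ, 0 ≤ ζ →
      ζ * α - Real.log (ρ ζ) ≤ ζstar * α - Real.log (ρ ζstar))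
    (u : S → ℝ) (hu : ∀ i, 0 < u i)
    (hleft : ∀ j, ∑ i, u i * (Real.exp (ζstar * g i) * p i j) = ρ ζstar * u j) :
    ∑ i, (u i * V ζstar i / ∑ j, u j * V ζstar j) * g i = α := by
  have hnear : ∀ᶠ ζ in 𝓝 ζstar, 0 ≤ ζ := (eventually_gt_nhds hζstar).mono fun _ => le_of_lt
  have hρpos := hρ ζstar hζstar.le
  have hρ' : deriv ρ ζstar = α * ρ ζstar :=
    deriv_eq_mul_of_isLocalMax_mul_sub_log (hnear.mono hmax) (hρdiff ζstar hζstar) hρpos.ne'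
  have hHF := tilted_eigenvalue_deriv_mul_dotProduct
    (hρdiff ζstar hζstar).hasDerivAt (fun j => (hVdiff ζstar hζstar j).hasDerivAt)
    (hnear.mono fun ζ hζ => funext fun i => by
      rw [tiltedKernel_mulVec_apply, Pi.smul_apply, smul_eq_mul, heq ζ hζ i])
    (funext fun j => by rw [vecMul_tiltedKernel_apply, hleft j, Pi.smul_apply, smul_eq_mul])
  have hT : 0 < u ⬝ᵥ V ζstar :=
    Finset.sum_pos (fun j _ => mul_pos (hu j) (hV ζstar hζstar.le j)) Finset.univ_nonempty
  have hmean : u ⬝ᵥ (g * V ζstar) = α * (u ⬝ᵥ V ζstar) := by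
    rw [hρ', mul_assoc, mul_left_comm] at hHF
    exact (mul_left_cancel₀ hρpos.ne' hHF).symm
  calc ∑ i, (u i * V ζstar i / ∑ j, u j * V ζstar j) * g i
      = (u ⬝ᵥ (g * V ζstar)) / (u ⬝ᵥ V ζstar) := by
        simp only [dotProduct, Pi.mul_apply, Finset.sum_div]
        exact Finset.sum_congr rfl fun i _ => by ring
    _ = α := by rw [hmean, mul_div_cancel_right₀ _ hT.ne']

/-- At an interior maximizer `ζ* > 0` of `ζ ↦ ζ * α - log (ρ ζ)` over
`[0, ∞)`, the stationary expectation of `g` under the tilted kernel equals the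
conditioning threshold `α`. -/
theorem stationary_mean_eq_threshold_at_maximizer
    {S : Type*} [Fintype S] [Nonempty S]
    (p : S → S → ℝ)
    (hp_pos : ∀ i j, 0 < p i j)
    (hp_row : ∀ i, ∑ j, p i j = 1)
    (g : S → ℝ) (α : ℝ)
    (ρ : ℝ → ℝ) (V : ℝ → S → ℝ)
    (hρ : ∀ ζ : ℝ, 0 ≤ ζ → 0 < ρ ζ)
    (hV : ∀ ζ : ℝ, 0 ≤ ζ → ∀ i, 0 < V ζ i)
    (heq : ∀ ζ : ℝ, 0 ≤ ζ → ∀ i,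
      ρ ζ * V ζ i = Real.exp (ζ * g i) * ∑ j, p i j * V ζ j)
    (hρdiff : ∀ ζ : ℝ, 0 < ζ → DifferentiableAt ℝ ρ ζ)
    (hVdiff : ∀ ζ : ℝ, 0 < ζ → ∀ i, DifferentiableAt ℝ (fun t => V t i) ζ)
    (ζstar : ℝ) (hζstar : 0 < ζstar)
    (hmax : ∀ ζ : ℝ, 0 ≤ ζ →
      ζ * α - Real.log (ρ ζ) ≤ ζstar * α - Real.log (ρ ζstar))
    (u : S → ℝ) (hu : ∀ i, 0 < u i)
    (hleft : ∀ j, ∑ i, u i * (Real.exp (ζstar * g i) * p i j) = ρ ζstar * u j) :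
    ∑ i, (u i * V ζstar i / ∑ j, u j * V ζstar j) * g i = α :=
  stationary_mean_eq_threshold_at_maximizer_general p g α ρ V hρ hV heq hρdiff hVdiff ζstar hζstar
    hmax u hu hleft
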